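/- (Lemma 2.10, part 2, with a general direction) Let J be a vector space over ℂ equipped with a cubic norm structure, let Z ∈ J, and let f_Z : ℂ × J → ℂ be defined by f_Z(a,b) = a²N_J(Z) + a(b,Z^♯) + ½(b, b×Z). Then for all a, s ∈ ℂ and b, E ∈ J, the derivative at t = 0 of t ↦ f_Z(a + ts, b + t(−sZ + E)) equals s(−aN_J(Z) − (b,Z^♯)) + a(E,Z^♯) + (b, Z×E). -/

import Mathlib

/-- A cubic norm structure on a vector space `J` over a field `F` of characteristic 0:
a cubic form `N`, the (unique) symmetric trilinear form `T` with `T x x x = 6 * N x`,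
a quadratic map `sharp` with bilinear symmetric linearization `cross`,
a base point `one`, and a symmetric bilinear trace pairing `p`,
satisfying the four defining axioms. -/
structure CubicNormStructure (F : Type) [Field F] (J : Type) [AddCommGroup J] [Module F J] where
  /-- the cubic norm form -/
  N : J → F
  N_smul : ∀ (t : F) (x : J), N (t • x) = t ^ 3 * N x
  /-- the symmetric trilinear form with `T x x x = 6 * N x` -/
  T : J → J → J → F
  T_add_left : ∀ x x' y z, T (x + x') y z = T x y z + T x' y z
  T_smul_left : ∀ (t : F) (x y z : J), T (t • x) y z = t * T x y z
  T_symm12 : ∀ x y z, T x y z = T y x z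
  T_symm23 : ∀ x y z, T x y z = T x z y
  T_diag : ∀ x, T x x x = 6 * N x
  /-- the quadratic adjoint map -/
  sharp : J → J
  sharp_smul : ∀ (t : F) (x : J), sharp (t • x) = (t ^ 2) • sharp x
  /-- the symmetric bilinear cross product `x × y = (x+y)^♯ - x^♯ - y^♯` -/
  cross : J → J → J
  cross_def : ∀ x y, cross x y = sharp (x + y) - sharp x - sharp y
  cross_add_left : ∀ x x' y, cross (x + x') y = cross x y + cross x' y
  cross_smul_left : ∀ (t : F) (x y : J), cross (t • x) y = t • cross x y
  /-- the base point `1_J` -/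
  one : J
  /-- the symmetric bilinear trace pairing -/
  p : J → J → F
  p_add_left : ∀ x x' y, p (x + x') y = p x y + p x' y
  p_smul_left : ∀ (t : F) (x y : J), p (t • x) y = t * p x y
  p_symm : ∀ x y, p x y = p y x
  N_one : N one = 1
  sharp_one : sharp one = one
  cross_one : ∀ x, cross one x = p one x • one - x
  sharp_sharp : ∀ x, sharp (sharp x) = N x • x
  p_eq : ∀ x y, p x y = (1 / 4 : F) * (T one one x * T one one y) - T one x y
  N_add : ∀ x y, N (x + y) = N x + p (sharp x) y + p x (sharp y) + N y

/-- The cubic polynomial `f_Z(a,b) = a² N(Z) + a (b, Z^♯) + ½ (b, b×Z)`. -/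
noncomputable def fZ {J : Type} [AddCommGroup J] [Module ℂ J]
    (c : CubicNormStructure ℂ J) (Z : J) (a : ℂ) (b : J) : ℂ :=
  a ^ 2 * c.N Z + a * c.p b (c.sharp Z) + (1 / 2 : ℂ) * c.p b (c.cross b Z)

/-! The curve `t ↦ (a + t s, b + t v)` makes `f_Z` a quadratic polynomial in `t`, so the derivative at `0`
is its linear coefficient `2 a s N(Z) + a (v, Z^♯) + s (b, Z^♯) + (b, v × Z)`; here the two cross terms
of `½ (b, b × Z)` combine because `(x, y × z)` is symmetric in all three arguments. For
`v = -s Z + E`, the identities `(Z, Z^♯) = 3 N(Z)` and `Z × Z = 2 Z^♯` give the stated formula. -/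

namespace CubicNormStructure

section Field

variable {F J : Type} [Field F] [AddCommGroup J] [Module F J] (c : CubicNormStructure F J)

lemma p_add_right (x y z : J) : c.p x (y + z) = c.p x y + c.p x z := by
  rw [c.p_symm, c.p_add_left, c.p_symm y, c.p_symm z]

lemma p_smul_right (t : F) (x y : J) : c.p x (t • y) = t * c.p x y := by
  rw [c.p_symm, c.p_smul_left, c.p_symm y]

lemma cross_comm (x y : J) : c.cross x y = c.cross y x := by
  rw [c.cross_def, c.cross_def, add_comm y x]
  abel

lemma sharp_add (x y : J) : c.sharp (x + y) = c.sharp x + c.sharp y + c.cross x y := by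
  rw [c.cross_def]
  abel

lemma cross_self (x : J) : c.cross x x = (2 : F) • c.sharp x := by
  rw [c.cross_def, ← two_smul F x, c.sharp_smul]
  module

/-- Comparing the two ways of expanding `N (x + y + z)` with `N_add`. -/
lemma p_cross_left (x y z : J) : c.p (c.cross x y) z = c.p x (c.cross y z) := by
  have hxy_z := c.N_add (x + y) z
  have hx_yz := c.N_add x (y + z)
  rw [c.sharp_add, c.p_add_left, c.p_add_left, c.p_add_left] at hxy_z
  rw [← add_assoc, c.sharp_add, c.p_add_right, c.p_add_right, c.p_add_right] at hx_yz
  linear_combination hx_yz - hxy_z - c.N_add x y + c.N_add y z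

lemma p_cross_right_comm (x y z : J) : c.p x (c.cross y z) = c.p y (c.cross x z) := by
  rw [← c.p_cross_left, ← c.p_cross_left, c.cross_comm]

/-- Euler's identity for the cubic form `N`: `N (2x) = 8 N x` against `N_add x x`. -/
lemma p_sharp_self [CharZero F] (x : J) : c.p x (c.sharp x) = 3 * c.N x := by
  have hN_two : c.N (x + x) = 8 * c.N x := by
    rw [← two_smul F x, c.N_smul]
    norm_num
  have hN_add := c.N_add x x
  rw [c.p_symm (c.sharp x)] at hN_add
  linear_combination (1 / 2 : F) * hN_two - (1 / 2 : F) * hN_add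

end Field

variable {J : Type} [AddCommGroup J] [Module ℂ J] (c : CubicNormStructure ℂ J)

lemma fZ_add_mul_add_smul (Z : J) (a s t : ℂ) (b v : J) :
    fZ c Z (a + t * s) (b + t • v)
      = fZ c Z a b
        + (2 * a * s * c.N Z + a * c.p v (c.sharp Z) + s * c.p b (c.sharp Z)
            + c.p b (c.cross v Z)) * t
        + fZ c Z s v * t ^ 2 := by
  have hcross_swap : c.p v (c.cross b Z) = c.p b (c.cross v Z) := c.p_cross_right_comm v b Z
  simp only [fZ, c.cross_add_left, c.cross_smul_left, c.p_add_left, c.p_add_right,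
    c.p_smul_left, c.p_smul_right, hcross_swap]
  ring

lemma deriv_fZ_line (Z : J) (a s : ℂ) (b v : J) :
    deriv (fun t : ℂ => fZ c Z (a + t * s) (b + t • v)) 0
      = 2 * a * s * c.N Z + a * c.p v (c.sharp Z) + s * c.p b (c.sharp Z)
          + c.p b (c.cross v Z) := by
  simp only [c.fZ_add_mul_add_smul]
  set k := 2 * a * s * c.N Z + a * c.p v (c.sharp Z) + s * c.p b (c.sharp Z) + c.p b (c.cross v Z)
  have hquad : HasDerivAt (fun t : ℂ => fZ c Z a b + k * t + fZ c Z s v * t ^ 2)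
      (k * 1 + fZ c Z s v * (↑2 * 0 ^ (2 - 1))) 0 :=
    (((hasDerivAt_id 0).const_mul k).const_add _).add ((hasDerivAt_pow 2 0).const_mul _)
  simpa using hquad.deriv

end CubicNormStructure

/-- Derivative of `f_Z` at `t = 0` in a general direction `(s, -s•Z + E)`. -/
theorem fZ_deriv_general_direction
    (J : Type) [AddCommGroup J] [Module ℂ J]
    (c : CubicNormStructure ℂ J) (Z : J) (a s : ℂ) (b E : J) :
    deriv (fun t : ℂ => fZ c Z (a + t * s) (b + t • (-(s • Z) + E))) 0
      = s * (-(a * c.N Z) - c.p b (c.sharp Z))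
        + a * c.p E (c.sharp Z) + c.p b (c.cross Z E) := by
  rw [c.deriv_fZ_line, ← neg_smul, c.p_add_left, c.p_smul_left, c.p_sharp_self,
    c.cross_add_left, c.cross_smul_left, c.cross_self, c.p_add_right, c.p_smul_right,
    c.p_smul_right, c.cross_comm E]
  ring
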